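/- arXiv:1503.06921 — 7 statements merged into one kernel-verified Lean document; each statement's English description precedes it below -/
import Mathlib

section
/- Let L be a lattice. For all elements p=(p₁,p₂) and q=(q₁,q₂) of L×L, the merging term of the bilattice duplicator evaluates as (p ∧ₖ (p ∨ₜ q)) ∨ₖ (q ∧ₖ (p ∧ₜ q)) = (p₁, q₂). In particular, applied to diagonal elements, the term v(x,y) = (x∧ₖ(x∨ₜy))∨ₖ(y∧ₖ(x∧ₜy)) satisfies v((a,a),(b,b)) = (a,b) for all a,b ∈ L, i.e. condition (M) holds for the bilattice duplicator. -/
/-- Truth join of the product bilattice `L ⊙ L`. -/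
def joinT {L : Type*} [Lattice L] (p q : L × L) : L × L := (p.1 ⊔ q.1, p.2 ⊓ q.2)

/-- Truth meet of the product bilattice `L ⊙ L`. -/
def meetT {L : Type*} [Lattice L] (p q : L × L) : L × L := (p.1 ⊓ q.1, p.2 ⊔ q.2)

/-- Knowledge join of the product bilattice `L ⊙ L`. -/
def joinK {L : Type*} [Lattice L] (p q : L × L) : L × L := (p.1 ⊔ q.1, p.2 ⊔ q.2)

/-- Knowledge meet of the product bilattice `L ⊙ L`. -/
def meetK {L : Type*} [Lattice L] (p q : L × L) : L × L := (p.1 ⊓ q.1, p.2 ⊓ q.2)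

section

variable {L : Type*} [Lattice L]

def duplicatorMerge (p q : L × L) : L × L :=
  joinK (meetK p (joinT p q)) (meetK q (meetT p q))

theorem duplicatorMerge_eq (p q : L × L) : duplicatorMerge p q = (p.1, q.2) := by
  refine Prod.ext ?_ ?_
  · show p.1 ⊓ (p.1 ⊔ q.1) ⊔ q.1 ⊓ (p.1 ⊓ q.1) = p.1
    rw [inf_sup_self]
    exact sup_eq_left.2 (inf_le_right.trans inf_le_left)
  · show p.2 ⊓ (p.2 ⊓ q.2) ⊔ q.2 ⊓ (p.2 ⊔ q.2) = q.2
    rw [inf_eq_left.2 (le_sup_right : q.2 ≤ p.2 ⊔ q.2)]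
    exact sup_eq_right.2 (inf_le_right.trans inf_le_right)

end

/-- The merging term `v(x,y) = (x ∧ₖ (x ∨ₜ y)) ∨ₖ (y ∧ₖ (x ∧ₜ y))` of the bilattice
duplicator evaluates on `L ⊙ L` to `(p₁, q₂)`; in particular on diagonal elements it
satisfies `v((a,a),(b,b)) = (a,b)`, i.e. condition (M) holds. -/
theorem stmt2 {L : Type*} [Lattice L] :
    (∀ p q : L × L,
      joinK (meetK p (joinT p q)) (meetK q (meetT p q)) = (p.1, q.2)) ∧
    (∀ a b : L,
      joinK (meetK (a, a) (joinT (a, a) (b, b))) (meetK (b, b) (meetT (a, a) (b, b)))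
        = (a, b)) :=
  ⟨duplicatorMerge_eq, fun a b => duplicatorMerge_eq (a, a) (b, b)⟩
end

section
/- Let A be a set equipped with binary operations ∨ₜ, ∧ₜ, ∨ₖ, ∧ₖ and unary operations ¬ and − such that − is involutive, −(x∨ₜy)=−x∨ₜ−y, −(x∧ₜy)=−x∧ₜ−y, −(x∨ₖy)=−x∧ₖ−y, −(x∧ₖy)=−x∨ₖ−y, and −(¬x)=¬(−x) for all x,y ∈ A. Let h: A → Bool×Bool preserve ∨ₜ, ∧ₜ, ∨ₖ, ∧ₖ and ¬, where on Bool×Bool these operations are (a₁,a₂)∨ₜ(b₁,b₂)=(a₁∨b₁,a₂∧b₂), (a₁,a₂)∧ₜ(b₁,b₂)=(a₁∧b₁,a₂∨b₂), ∨ₖ and ∧ₖ componentwise, and ¬(a₁,a₂)=(a₂,a₁). Write h(c)=(h₁(c),h₂(c)), and define h': A → (Bool×Bool)×(Bool×Bool) by h'(c) = ((h₁(c), ¬h₂(−c)), (h₂(c), ¬h₁(−c))) (¬ denoting Boolean complement). Then h' preserves the six operations of the sixteen-element algebra S, namely: h'(x∨ₜy)=h'(x)∨ₜˢh'(y), h'(x∧ₜy)=h'(x)∧ₜˢh'(y),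 h'(x∨ₖy)=h'(x)∨ₖˢh'(y), h'(x∧ₖy)=h'(x)∧ₖˢh'(y), h'(¬x)=¬ˢh'(x), and h'(−x)=−ˢh'(x). Moreover, if h(a)≠h(b) then h'(a)≠h'(b). -/
/-!
`h'(c)` records `h(c)` together with the Boolean complement of `h(−c)`. Since `−` preserves
`∨ₜ, ∧ₜ, ¬` and exchanges `∨ₖ` with `∧ₖ`, the pair `(h(c), h(−c))` transforms under each
operation by Boolean identities, and complementing the second entry (De Morgan) turns the
exchanged knowledge operations back into the componentwise ones of `S`. Conflation in `S`
swaps the two entries, matching `−(−c) = c`.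
-/

/-- The four-element carrier `Bool × Bool`. -/
abbrev B2 := Bool × Bool

/-- Componentwise join on `Bool × Bool`. -/
def bJoin (a b : B2) : B2 := (a.1 || b.1, a.2 || b.2)

/-- Componentwise meet on `Bool × Bool`. -/
def bMeet (a b : B2) : B2 := (a.1 && b.1, a.2 && b.2)

/-- De Morgan negation `∼(a,b) = (¬b, ¬a)` on `Bool × Bool`. -/
def dmNeg (a : B2) : B2 := (!a.2, !a.1)

/-- Truth join on `Bool × Bool`: `(a₁,a₂) ∨ₜ (b₁,b₂) = (a₁∨b₁, a₂∧b₂)`. -/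
def bJoinT (a b : B2) : B2 := (a.1 || b.1, a.2 && b.2)

/-- Truth meet on `Bool × Bool`: `(a₁,a₂) ∧ₜ (b₁,b₂) = (a₁∧b₁, a₂∨b₂)`. -/
def bMeetT (a b : B2) : B2 := (a.1 && b.1, a.2 || b.2)

/-- Bilattice negation `¬(a₁,a₂) = (a₂,a₁)` on `Bool × Bool`. -/
def bNeg (a : B2) : B2 := (a.2, a.1)

/-- The sixteen-element carrier `(Bool × Bool) × (Bool × Bool)`. -/
abbrev S16 := B2 × B2

/-- Truth join of the sixteen-element algebra `S`. -/
def sJoinT (p q : S16) : S16 := (bJoin p.1 q.1, bMeet p.2 q.2)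

/-- Truth meet of the sixteen-element algebra `S`. -/
def sMeetT (p q : S16) : S16 := (bMeet p.1 q.1, bJoin p.2 q.2)

/-- Knowledge join of the sixteen-element algebra `S`. -/
def sJoinK (p q : S16) : S16 := (bJoin p.1 q.1, bJoin p.2 q.2)

/-- Knowledge meet of the sixteen-element algebra `S`. -/
def sMeetK (p q : S16) : S16 := (bMeet p.1 q.1, bMeet p.2 q.2)

/-- Negation of the sixteen-element algebra `S`. -/
def sNeg (p : S16) : S16 := (p.2, p.1)

/-- Conflation of the sixteen-element algebra `S`: `−ˢ(p,q) = (∼q, ∼p)`. -/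
def sConf (p : S16) : S16 := (dmNeg p.2, dmNeg p.1)

def toS16 (u v : B2) : S16 := ((u.1, !v.2), (u.2, !v.1))

section toS16

variable (u u' v v' : B2)

theorem toS16_bJoinT :
    toS16 (bJoinT u u') (bJoinT v v') = sJoinT (toS16 u v) (toS16 u' v') := by
  simp only [toS16, bJoinT, sJoinT, bJoin, bMeet, Bool.not_and, Bool.not_or]

theorem toS16_bMeetT :
    toS16 (bMeetT u u') (bMeetT v v') = sMeetT (toS16 u v) (toS16 u' v') := by
  simp only [toS16, bMeetT, sMeetT, bJoin, bMeet, Bool.not_and, Bool.not_or]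

theorem toS16_bJoin_bMeet :
    toS16 (bJoin u u') (bMeet v v') = sJoinK (toS16 u v) (toS16 u' v') := by
  simp only [toS16, sJoinK, bJoin, bMeet, Bool.not_and]

theorem toS16_bMeet_bJoin :
    toS16 (bMeet u u') (bJoin v v') = sMeetK (toS16 u v) (toS16 u' v') := by
  simp only [toS16, sMeetK, bJoin, bMeet, Bool.not_or]

theorem toS16_bNeg : toS16 (bNeg u) (bNeg v) = sNeg (toS16 u v) := rfl

theorem toS16_swap : toS16 v u = sConf (toS16 u v) := by
  simp only [toS16, sConf, dmNeg, Bool.not_not]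

theorem toS16_injective_left {u u' v v' : B2} (h : toS16 u v = toS16 u' v') : u = u' :=
  Prod.ext (congrArg (·.1.1) h) (congrArg (·.2.1) h)

end toS16

/-- Given an algebra `A` with bilattice operations and a commuting involutive conflation,
and a homomorphism `h : A → Bool × Bool` of the `−`-free reduct, the map
`h'(c) = ((h₁(c), ¬h₂(−c)), (h₂(c), ¬h₁(−c)))` is a homomorphism into the
sixteen-element algebra `S`, and it separates whatever `h` separates. -/
theorem stmt5 {A : Type*}
    (vt mt vk mk : A → A → A) (neg cf : A → A)
    (hcf_inv : ∀ x : A, cf (cf x) = x)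
    (hcf_vt : ∀ x y : A, cf (vt x y) = vt (cf x) (cf y))
    (hcf_mt : ∀ x y : A, cf (mt x y) = mt (cf x) (cf y))
    (hcf_vk : ∀ x y : A, cf (vk x y) = mk (cf x) (cf y))
    (hcf_mk : ∀ x y : A, cf (mk x y) = vk (cf x) (cf y))
    (hcf_neg : ∀ x : A, cf (neg x) = neg (cf x))
    (h : A → B2)
    (hvt : ∀ x y : A, h (vt x y) = bJoinT (h x) (h y))
    (hmt : ∀ x y : A, h (mt x y) = bMeetT (h x) (h y))
    (hvk : ∀ x y : A, h (vk x y) = bJoin (h x) (h y))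
    (hmk : ∀ x y : A, h (mk x y) = bMeet (h x) (h y))
    (hneg : ∀ x : A, h (neg x) = bNeg (h x)) :
    let h' : A → S16 := fun c =>
      (((h c).1, !(h (cf c)).2), ((h c).2, !(h (cf c)).1))
    (∀ x y : A, h' (vt x y) = sJoinT (h' x) (h' y)) ∧
    (∀ x y : A, h' (mt x y) = sMeetT (h' x) (h' y)) ∧
    (∀ x y : A, h' (vk x y) = sJoinK (h' x) (h' y)) ∧
    (∀ x y : A, h' (mk x y) = sMeetK (h' x) (h' y)) ∧
    (∀ x : A, h' (neg x) = sNeg (h' x)) ∧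
    (∀ x : A, h' (cf x) = sConf (h' x)) ∧
    (∀ a b : A, h a ≠ h b → h' a ≠ h' b) := by
  intro h'
  have h'_eq : ∀ c, h' c = toS16 (h c) (h (cf c)) := fun _ => rfl
  simp only [h'_eq]
  refine ⟨fun x y => ?_, fun x y => ?_, fun x y => ?_, fun x y => ?_, fun x => ?_, fun x => ?_,
    fun a b hab hh' => hab (toS16_injective_left hh')⟩
  · rw [hcf_vt, hvt, hvt, toS16_bJoinT]
  · rw [hcf_mt, hmt, hmt, toS16_bMeetT]
  · rw [hcf_vk, hvk, hmk, toS16_bJoin_bMeet]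
  · rw [hcf_mk, hmk, hvk, toS16_bMeet_bJoin]
  · rw [hcf_neg, hneg, hneg, toS16_bNeg]
  · rw [hcf_inv, toS16_swap]
end

section
/- Let L be a bounded lattice and suppose imp: (L×L) → (L×L) → (L×L) is a residuum of the knowledge meet: for all p,q,r ∈ L×L, p ∧ₖ q ≤ₖ r if and only if q ≤ₖ imp p r, where ∧ₖ is the componentwise meet and ≤ₖ the componentwise order on L×L. Define a ⇨ c := the first component of imp (a,⊥) (c,⊥), for a,c ∈ L. Then: (i) for all a,b,c ∈ L, a ∧ b ≤ c if and only if b ≤ a ⇨ c (so ⇨ makes L a Heyting algebra); and (ii) for all a,b,c,d ∈ L, imp (a,b) (c,d) = (a ⇨ c, b ⇨ d). -/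
/-! Testing the residuation against elements `(x, ⊥)` (resp. `(⊥, x)`) isolates one coordinate:
`(a, y) ⊓ (x, ⊥) ≤ (c, z)` holds iff `a ⊓ x ≤ c`, whatever `y` and `z` are. Hence each component
of `imp p r` is the largest `x` with `pᵢ ⊓ x ≤ rᵢ`, which depends only on the `i`-th coordinates. -/

section ProdResiduum

variable {α β : Type*} [SemilatticeInf α] [SemilatticeInf β] {imp : α × β → α × β → α × β}

theorem le_fst_imp_iff_of_residuum [OrderBot β] (hres : ∀ p q r, p ⊓ q ≤ r ↔ q ≤ imp p r)
    (a c x : α) (y z : β) : x ≤ (imp (a, y) (c, z)).1 ↔ a ⊓ x ≤ c := by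
  simpa [Prod.le_def] using (hres (a, y) (x, ⊥) (c, z)).symm

theorem le_snd_imp_iff_of_residuum [OrderBot α] (hres : ∀ p q r, p ⊓ q ≤ r ↔ q ≤ imp p r)
    (a c : α) (y z x : β) : x ≤ (imp (a, y) (c, z)).2 ↔ y ⊓ x ≤ z := by
  simpa [Prod.le_def] using (hres (a, y) (⊥, x) (c, z)).symm

end ProdResiduum

/-- Let `L` be a bounded lattice and suppose `imp` is a residuum of the knowledge meet on
`L × L` (the componentwise meet, with the componentwise order).  Then
`a ⇨ c := (imp (a,⊥) (c,⊥)).1` is a Heyting implication on `L`, and `imp` acts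
componentwise: `imp (a,b) (c,d) = (a ⇨ c, b ⇨ d)`. -/
theorem stmt6 {L : Type*} [Lattice L] [BoundedOrder L]
    (imp : L × L → L × L → L × L)
    (hres : ∀ p q r : L × L, p ⊓ q ≤ r ↔ q ≤ imp p r) :
    (∀ a b c : L, a ⊓ b ≤ c ↔ b ≤ (imp (a, ⊥) (c, ⊥)).1) ∧
    (∀ a b c d : L,
      imp (a, b) (c, d) = ((imp (a, ⊥) (c, ⊥)).1, (imp (b, ⊥) (d, ⊥)).1)) := by
  refine ⟨fun a b c => (le_fst_imp_iff_of_residuum hres a c b ⊥ ⊥).symm,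
    fun a b c d => Prod.ext ?_ ?_⟩
  · exact eq_of_forall_le_iff fun x => by
      rw [le_fst_imp_iff_of_residuum hres, le_fst_imp_iff_of_residuum hres]
  · exact eq_of_forall_le_iff fun x => by
      rw [le_snd_imp_iff_of_residuum hres, le_fst_imp_iff_of_residuum hres]
end

section
/- Let L be a bounded lattice and suppose imp: (L×L) → (L×L) → (L×L) is a residuum of the truth meet: for all p,q,r ∈ L×L, p ∧ₜ q ≤ₜ r if and only if q ≤ₜ imp p r, where (a₁,a₂)∧ₜ(b₁,b₂)=(a₁∧b₁, a₂∨b₂) and (a₁,a₂)≤ₜ(b₁,b₂) iff a₁≤b₁ and b₂≤a₂. Define a ⇨ c := the first component of imp (a,⊤) (c,⊤), and c ∖ a := the second component of imp (⊥,a) (⊥,c), for a,c ∈ L. Then: (i) for all a,b,c ∈ L, a ∧ b ≤ c if and only if b ≤ a ⇨ c; and (ii) for all a,b,c ∈ L, c ≤ a ∨ b if and only if c ∖ a ≤ b. In particular L carries both a Heyting implication and a co-Heyting difference, i.e. L is a bi-Heyting algebra. -/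
/-- Truth order on `L × L`. -/
def leT {L : Type*} [Lattice L] (p q : L × L) : Prop := p.1 ≤ q.1 ∧ q.2 ≤ p.2

section Residuated

variable {L : Type*} [Lattice L] {imp : L × L → L × L → L × L}

theorem inf_le_iff_le_fst_imp_top [OrderTop L]
    (hres : ∀ p q r : L × L, leT (meetT p q) r ↔ leT q (imp p r)) (a b c : L) :
    a ⊓ b ≤ c ↔ b ≤ (imp (a, ⊤) (c, ⊤)).1 := by
  simpa [leT, meetT] using hres (a, ⊤) (b, ⊤) (c, ⊤)

theorem le_sup_iff_snd_imp_bot_le [OrderBot L]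
    (hres : ∀ p q r : L × L, leT (meetT p q) r ↔ leT q (imp p r)) (a b c : L) :
    c ≤ a ⊔ b ↔ (imp (⊥, a) (⊥, c)).2 ≤ b := by
  simpa [leT, meetT] using hres (⊥, a) (⊥, b) (⊥, c)

end Residuated

/-- Let `L` be a bounded lattice and suppose `imp` is a residuum of the truth meet on
`L × L` (with respect to the truth order).  Then `a ⇨ c := (imp (a,⊤) (c,⊤)).1` is a
Heyting implication on `L` and `c ∖ a := (imp (⊥,a) (⊥,c)).2` is a co-Heyting
difference on `L`; in particular `L` is a bi-Heyting algebra. -/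
theorem stmt7 {L : Type*} [Lattice L] [BoundedOrder L]
    (imp : L × L → L × L → L × L)
    (hres : ∀ p q r : L × L, leT (meetT p q) r ↔ leT q (imp p r)) :
    (∀ a b c : L, a ⊓ b ≤ c ↔ b ≤ (imp (a, ⊤) (c, ⊤)).1) ∧
    (∀ a b c : L, c ≤ a ⊔ b ↔ (imp (⊥, a) (⊥, c)).2 ≤ b) :=
  ⟨inf_le_iff_le_fst_imp_top hres, le_sup_iff_snd_imp_bot_le hres⟩
end

section
/- Let Σ be a first-order language having only function symbols, let A be a Σ-structure, and let Γ, n, t₁, t₂ be duplication data with duplicated structure P_Γ(A) on A×A. Assume: (M-condition) there is a binary L_Γ-term v with v realized in P_Γ(A) at ((a,b),(c,d)) equal to (a,d) for all a,b,c,d ∈ A; (S-condition) there is a unary L_Γ-term s with s realized in P_Γ(A) at (a,b) equal to (b,a) for all a,b ∈ A; and (W-condition) for every n-ary function symbol f of Σ there is an n-ary L_Γ-term w_f with w_f realized in P_Γ(A) at ((a₁,b₁),…,(aₙ,bₙ)) equal to (f^A(a₁,…,aₙ), f^A(b₁,…,bₙ)). Then every subset S ⊆ A×A that is closed under all operations of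 P_Γ(A) satisfies S = C × C, where C is the image of S under the first projection; moreover C is closed under all Σ-operations of A (i.e. C is the universe of a Σ-substructure and S is the universe of an L_Γ-substructure isomorphic to the duplicate of that substructure). -/
open FirstOrder FirstOrder.Language

/-- The language `Σ` with function symbols `F` (indexed by arity) and no relation
symbols. -/
def Sig (F : ℕ → Type*) : Language := ⟨F, fun _ => Empty⟩

/-- The duplicated language `L_Γ`: one function symbol of arity `k` for each `γ : Γ k`,
and no other symbols. -/
def LGam (Γ : ℕ → Type*) : Language := ⟨Γ, fun _ => Empty⟩

/-- The variable assignment sending, for `x : Fin k → A × A`, the `(2i)`-th (0-based)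
variable to the first component of `x i` and the `(2i+1)`-st variable to its second
component. -/
def assignDup {A : Type*} {k : ℕ} (x : Fin k → A × A) : Fin (2 * k) → A :=
  fun j =>
    if j.val % 2 = 0 then (x ⟨j.val / 2, by have := j.isLt; omega⟩).1
    else (x ⟨j.val / 2, by have := j.isLt; omega⟩).2

/-- Interpretation of the duplicated symbol `γ` on `A × A`: the pair of the realizations
of `t₁ γ` and `t₂ γ` in `A` under the duplicating variable assignment. -/
def dupFun {F Γ : ℕ → Type*} {A : Type*} [(Sig F).Structure A]
    (t₁ t₂ : ∀ {k : ℕ}, Γ k → (Sig F).Term (Fin (2 * k)))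
    {k : ℕ} (γ : Γ k) (x : Fin k → A × A) : A × A :=
  ((t₁ γ).realize (assignDup x), (t₂ γ).realize (assignDup x))

/-- The duplicated structure `P_Γ(A)` on `A × A`. -/
def dupStructure {F Γ : ℕ → Type*}
    (t₁ t₂ : ∀ {k : ℕ}, Γ k → (Sig F).Term (Fin (2 * k)))
    (A : Type*) [(Sig F).Structure A] : (LGam Γ).Structure (A × A) where
  funMap := fun γ x => dupFun t₁ t₂ γ x
  RelMap := fun r _ => r.elim

/-- Realization of an `L_Γ`-term in the duplicated structure `P_Γ(A)`. -/
def dupRealize {F Γ : ℕ → Type*}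
    (t₁ t₂ : ∀ {k : ℕ}, Γ k → (Sig F).Term (Fin (2 * k)))
    (A : Type*) [(Sig F).Structure A] {α : Type*} (env : α → A × A)
    (t : (LGam Γ).Term α) : A × A :=
  letI := dupStructure t₁ t₂ A
  t.realize env

/-! The swap term makes `S` symmetric and the merge term lets us combine `(a, b), (c, d) ∈ S`
into `(a, d)`; together they force `S = C × C`. For a `Σ`-symbol `f` and `aᵢ ∈ C`, the diagonal
pairs `(aᵢ, aᵢ)` lie in `S = C × C`, and `w_f` maps them into `(f aᵢ, f aᵢ) ∈ S`. -/

theorem Set.eq_fst_image_prod_of_swap_mem_of_merge_mem {α : Type*} {S : Set (α × α)}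
    (hswap : ∀ p ∈ S, p.swap ∈ S) (hmerge : ∀ p ∈ S, ∀ q ∈ S, (p.1, q.2) ∈ S) :
    S = (Prod.fst '' S) ×ˢ (Prod.fst '' S) := by
  ext ⟨a, b⟩
  constructor
  · intro h
    exact ⟨⟨(a, b), h, rfl⟩, ⟨(b, a), hswap _ h, rfl⟩⟩
  · rintro ⟨⟨p, hp, rfl⟩, ⟨q, hq, rfl⟩⟩
    exact hmerge p hp q.swap (hswap q hq)

section DupClosed

variable {F Γ : ℕ → Type*} {A : Type*} [(Sig F).Structure A]
  {t₁ t₂ : ∀ {k : ℕ}, Γ k → (Sig F).Term (Fin (2 * k))} {S : Set (A × A)}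

variable (t₁ t₂) in
def DupClosed (S : Set (A × A)) : Prop :=
  ∀ {k : ℕ} (γ : Γ k) (x : Fin k → A × A), (∀ i, x i ∈ S) → dupFun t₁ t₂ γ x ∈ S

theorem DupClosed.dupRealize_mem (hS : DupClosed t₁ t₂ S) {α : Type*}
    (t : (LGam Γ).Term α) {env : α → A × A} (henv : ∀ i, env i ∈ S) :
    dupRealize t₁ t₂ A env t ∈ S := by
  induction t with
  | var i => exact henv i
  | func γ ts ih => exact hS γ _ ih

theorem DupClosed.swap_mem (hS : DupClosed t₁ t₂ S) {s : (LGam Γ).Term (Fin 1)}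
    (hs : ∀ a b : A, dupRealize t₁ t₂ A ![(a, b)] s = (b, a)) {p : A × A} (hp : p ∈ S) :
    p.swap ∈ S := by
  obtain ⟨a, b⟩ := p
  simpa [hs] using hS.dupRealize_mem s (env := ![(a, b)]) (by simpa using hp)

theorem DupClosed.merge_mem (hS : DupClosed t₁ t₂ S) {v : (LGam Γ).Term (Fin 2)}
    (hv : ∀ a b c d : A, dupRealize t₁ t₂ A ![(a, b), (c, d)] v = (a, d))
    {p q : A × A} (hp : p ∈ S) (hq : q ∈ S) : (p.1, q.2) ∈ S := by
  simpa [hv] using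
    hS.dupRealize_mem v (env := ![(p.1, p.2), (q.1, q.2)]) (by simp [Fin.forall_fin_two, hp, hq])

theorem DupClosed.eq_fst_image_prod (hS : DupClosed t₁ t₂ S) {s : (LGam Γ).Term (Fin 1)}
    (hs : ∀ a b : A, dupRealize t₁ t₂ A ![(a, b)] s = (b, a)) {v : (LGam Γ).Term (Fin 2)}
    (hv : ∀ a b c d : A, dupRealize t₁ t₂ A ![(a, b), (c, d)] v = (a, d)) :
    S = (Prod.fst '' S) ×ˢ (Prod.fst '' S) :=
  Set.eq_fst_image_prod_of_swap_mem_of_merge_mem (fun _ hp => hS.swap_mem hs hp)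
    (fun _ hp _ hq => hS.merge_mem hv hp hq)

theorem DupClosed.funMap_mem_fst_image (hS : DupClosed t₁ t₂ S) {k : ℕ} {f : F k}
    {w : (LGam Γ).Term (Fin k)}
    (hw : ∀ a b : Fin k → A, dupRealize t₁ t₂ A (fun i => (a i, b i)) w =
      (Structure.funMap (L := Sig F) f a, Structure.funMap (L := Sig F) f b))
    {as : Fin k → A} (hdiag : ∀ i, (as i, as i) ∈ S) :
    Structure.funMap (L := Sig F) f as ∈ Prod.fst '' S :=
  ⟨_, by simpa [hw] using hS.dupRealize_mem w hdiag, rfl⟩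

end DupClosed

/-- Let `Σ` have only function symbols, `A` a `Σ`-structure, and `Γ, t₁, t₂` duplication
data.  Assume the M-condition (a binary `L_Γ`-term merging pairs), the S-condition (a
unary `L_Γ`-term swapping coordinates) and the W-condition (terms realizing `f × f`).
Then every subset `S ⊆ A × A` closed under all operations of `P_Γ(A)` satisfies
`S = C × C` where `C` is the first-projection image of `S`, and `C` is closed under all
`Σ`-operations of `A` (so `C` is the universe of a `Σ`-substructure and `S` is the
universe of an `L_Γ`-substructure isomorphic to its duplicate). -/
theorem stmt13 {F Γ : ℕ → Type*} {A : Type*} [(Sig F).Structure A]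
    (t₁ t₂ : ∀ {k : ℕ}, Γ k → (Sig F).Term (Fin (2 * k)))
    (hM : ∃ v : (LGam Γ).Term (Fin 2),
      ∀ a b c d : A, dupRealize t₁ t₂ A ![(a, b), (c, d)] v = (a, d))
    (hS : ∃ s : (LGam Γ).Term (Fin 1),
      ∀ a b : A, dupRealize t₁ t₂ A ![(a, b)] s = (b, a))
    (hW : ∀ {k : ℕ} (f : F k), ∃ w : (LGam Γ).Term (Fin k),
      ∀ a b : Fin k → A,
        dupRealize t₁ t₂ A (fun i => (a i, b i)) w =
          (Structure.funMap (L := Sig F) f a, Structure.funMap (L := Sig F) f b))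
    (S : Set (A × A))
    (hclosed : ∀ {k : ℕ} (γ : Γ k) (x : Fin k → A × A),
      (∀ i, x i ∈ S) → dupFun t₁ t₂ γ x ∈ S) :
    S = (Prod.fst '' S) ×ˢ (Prod.fst '' S) ∧
    (∀ {k : ℕ} (f : F k) (as : Fin k → A),
      (∀ i, as i ∈ Prod.fst '' S) →
        Structure.funMap (L := Sig F) f as ∈ Prod.fst '' S) := by
  have hdup : DupClosed t₁ t₂ S := hclosed
  obtain ⟨v, hv⟩ := hM
  obtain ⟨s, hs⟩ := hS
  have hprod := hdup.eq_fst_image_prod hs hv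
  refine ⟨hprod, fun f as has => ?_⟩
  obtain ⟨w, hw⟩ := hW f
  exact hdup.funMap_mem_fst_image hw fun i => hprod ▸ ⟨has i, has i⟩
end

section
/- Let Σ be a first-order language having only function symbols, let A be a Σ-structure, and let Γ, n, t₁, t₂ be duplication data with duplicated structure P_Γ(A) on A×A. Let D be an L_Γ-structure and g: P_Γ(A) → D an L_Γ-homomorphism, and define q: A → D by q(a) := g(a,a). Assume the (W-condition): for every m-ary function symbol f of Σ there is an m-ary L_Γ-term w_f with w_f realized in P_Γ(A) at ((a₁,b₁),…,(a_m,b_m)) equal to (f^A(a₁,…,a_m), f^A(b₁,…,b_m)). Then: (i) the kernel of q is compatible with every Σ-operation, i.e. for every m-ary function symbol f of Σ and all a₁,…,a_m, b₁,…,b_m ∈ A with q(aᵢ) = q(bᵢ) for all i, one has q(f^A(a₁,…,a_m)) = q(f^A(b₁,…,b_m)); and (ii) if moreover there is a binary L_Γ-term v with v realized in P_Γ(A) at ((a,b),(c,d)) equal to (a,d) for all a,b,c,d ∈ A, then g(a,b) = v realized in D at (q(a), q(b)), for all a,b ∈ A; in particular g is determined by q. -/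
open FirstOrder FirstOrder.Language

/-! Since `g` is a homomorphism out of `P_Γ(A)`, it carries the realization of any `L_Γ`-term in
`P_Γ(A)` to its realization in `D`.  Applied to `w_f` on the diagonal this writes `q ∘ f` as
`w_f^D` of the values of `q`, whence (i); applied to `v` at `((a,a),(b,b))`, whose value is
`(a,b)`, it gives (ii). -/

section DupHom

variable {F Γ : ℕ → Type*} {A D : Type*} [(Sig F).Structure A] [(LGam Γ).Structure D]
  {t₁ t₂ : ∀ {k : ℕ}, Γ k → (Sig F).Term (Fin (2 * k))} {g : A × A → D}
  (hg : ∀ {k : ℕ} (γ : Γ k) (x : Fin k → A × A),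
    g (dupFun t₁ t₂ γ x) = Structure.funMap (L := LGam Γ) γ (fun i => g (x i)))
include hg

def dupHom : @Hom (LGam Γ) (A × A) D (dupStructure t₁ t₂ A) _ :=
  letI := dupStructure t₁ t₂ A
  { toFun := g
    map_fun' := hg
    map_rel' := fun r => r.elim }

theorem map_dupRealize {α : Type*} (env : α → A × A) (t : (LGam Γ).Term α) :
    g (dupRealize t₁ t₂ A env t) = t.realize (g ∘ env) :=
  letI := dupStructure t₁ t₂ A
  (HomClass.realize_term (dupHom hg)).symm

theorem map_funMap_diag_eq_realize {m : ℕ} {f : F m} {w : (LGam Γ).Term (Fin m)}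
    (hw : ∀ a b : Fin m → A, dupRealize t₁ t₂ A (fun i => (a i, b i)) w =
      (Structure.funMap (L := Sig F) f a, Structure.funMap (L := Sig F) f b))
    (a : Fin m → A) :
    g (Structure.funMap (L := Sig F) f a, Structure.funMap (L := Sig F) f a) =
      w.realize fun i => g (a i, a i) := by
  rw [← hw a a, map_dupRealize hg]
  rfl

theorem map_eq_realize_diag {v : (LGam Γ).Term (Fin 2)}
    (hv : ∀ a b c d : A, dupRealize t₁ t₂ A ![(a, b), (c, d)] v = (a, d)) (a b : A) :
    g (a, b) = v.realize ![g (a, a), g (b, b)] := by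
  rw [← hv a a b b, map_dupRealize hg]
  congr 1
  funext i
  fin_cases i <;> rfl

end DupHom

/-- Let `Σ` have only function symbols, `A` a `Σ`-structure, `Γ, t₁, t₂` duplication
data, `D` an `L_Γ`-structure and `g : P_Γ(A) → D` an `L_Γ`-homomorphism; put
`q a := g (a,a)`.  Assume the W-condition (for each function symbol `f` of `Σ` an
`L_Γ`-term realizing `f × f` in `P_Γ(A)`).  Then (i) the kernel of `q` is compatible
with every `Σ`-operation; and (ii) for every binary `L_Γ`-term `v` realizing
`((a,b),(c,d)) ↦ (a,d)` in `P_Γ(A)`, one has `g (a,b) = v^D(q a, q b)` for all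
`a, b : A`; in particular `g` is determined by `q`. -/
theorem stmt14 {F Γ : ℕ → Type*} {A D : Type*}
    [(Sig F).Structure A] [(LGam Γ).Structure D]
    (t₁ t₂ : ∀ {k : ℕ}, Γ k → (Sig F).Term (Fin (2 * k)))
    (g : A × A → D)
    (hg : ∀ {k : ℕ} (γ : Γ k) (x : Fin k → A × A),
      g (dupFun t₁ t₂ γ x) = Structure.funMap (L := LGam Γ) γ (fun i => g (x i)))
    (hW : ∀ {m : ℕ} (f : F m), ∃ w : (LGam Γ).Term (Fin m),
      ∀ a b : Fin m → A,
        dupRealize t₁ t₂ A (fun i => (a i, b i)) w =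
          (Structure.funMap (L := Sig F) f a, Structure.funMap (L := Sig F) f b)) :
    (∀ {m : ℕ} (f : F m) (a b : Fin m → A),
      (∀ i, g (a i, a i) = g (b i, b i)) →
        g (Structure.funMap (L := Sig F) f a, Structure.funMap (L := Sig F) f a) =
          g (Structure.funMap (L := Sig F) f b, Structure.funMap (L := Sig F) f b)) ∧
    (∀ v : (LGam Γ).Term (Fin 2),
      (∀ a b c d : A, dupRealize t₁ t₂ A ![(a, b), (c, d)] v = (a, d)) →
        ∀ a b : A, g (a, b) = v.realize ![g (a, a), g (b, b)]) := by
  refine ⟨fun f a b hab => ?_, fun v hv => map_eq_realize_diag hg hv⟩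
  obtain ⟨w, hw⟩ := hW f
  rw [map_funMap_diag_eq_realize hg hw, map_funMap_diag_eq_realize hg hw, funext hab]
end

section
/- Let L and M be lattices with L nonempty, and let ψ: L×L → M×M be a map preserving the five bilattice operations: ψ(x∨ₜy)=ψ(x)∨ₜψ(y), ψ(x∧ₜy)=ψ(x)∧ₜψ(y), ψ(x∨ₖy)=ψ(x)∨ₖψ(y), ψ(x∧ₖy)=ψ(x)∧ₖψ(y), and ψ(¬x)=¬ψ(x), where on each product the operations are those of L⊙L and M⊙M respectively. Then there exists a lattice homomorphism h: L → M such that ψ(a,b) = (h(a), h(b)) for all (a,b) ∈ L×L. -/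
/-- Negation of the product bilattice `L ⊙ L`. -/
def negB {L : Type*} (p : L × L) : L × L := (p.2, p.1)

theorem joinK_meetK_joinT_negB_eq {L : Type*} [Lattice L] (a b : L) :
    joinK (meetK (a, a) (joinT (a, a) (b, b)))
      (negB (meetK (b, b) (joinT (a, a) (b, b)))) = (a, b) := by
  simp [joinK, meetK, joinT, negB]

section

variable {L M : Type*} {ψ : L × L → M × M}

theorem apply_diag_eq_of_map_negB (hneg : ∀ x : L × L, ψ (negB x) = negB (ψ x)) (a : L) :
    ψ (a, a) = ((ψ (a, a)).1, (ψ (a, a)).1) :=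
  Prod.ext rfl (congrArg Prod.fst (hneg (a, a))).symm

variable [Lattice L] [Lattice M]

theorem fst_apply_diag_sup (hvk : ∀ x y : L × L, ψ (joinK x y) = joinK (ψ x) (ψ y))
    (a b : L) : (ψ (a ⊔ b, a ⊔ b)).1 = (ψ (a, a)).1 ⊔ (ψ (b, b)).1 :=
  congrArg Prod.fst (hvk (a, a) (b, b))

theorem fst_apply_diag_inf (hmk : ∀ x y : L × L, ψ (meetK x y) = meetK (ψ x) (ψ y))
    (a b : L) : (ψ (a ⊓ b, a ⊓ b)).1 = (ψ (a, a)).1 ⊓ (ψ (b, b)).1 :=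
  congrArg Prod.fst (hmk (a, a) (b, b))

end

theorem stmt16_general {L M : Type*} [Lattice L] [Lattice M]
    (ψ : L × L → M × M)
    (hvt : ∀ x y : L × L, ψ (joinT x y) = joinT (ψ x) (ψ y))
    (hvk : ∀ x y : L × L, ψ (joinK x y) = joinK (ψ x) (ψ y))
    (hmk : ∀ x y : L × L, ψ (meetK x y) = meetK (ψ x) (ψ y))
    (hneg : ∀ x : L × L, ψ (negB x) = negB (ψ x)) :
    ∃ h : L → M,
      (∀ a b : L, h (a ⊔ b) = h a ⊔ h b) ∧
      (∀ a b : L, h (a ⊓ b) = h a ⊓ h b) ∧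
      ∀ a b : L, ψ (a, b) = (h a, h b) := by
  refine ⟨fun a => (ψ (a, a)).1, fst_apply_diag_sup hvk, fst_apply_diag_inf hmk, fun a b => ?_⟩
  rw [← joinK_meetK_joinT_negB_eq a b]
  simp only [hvk, hmk, hneg, hvt]
  rw [apply_diag_eq_of_map_negB hneg a, apply_diag_eq_of_map_negB hneg b]
  exact joinK_meetK_joinT_negB_eq _ _

/-- Every map `ψ : L × L → M × M` preserving the five bilattice operations of `L ⊙ L`
and `M ⊙ M` (with `L` nonempty) is of the form `ψ (a,b) = (h a, h b)` for a lattice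
homomorphism `h : L → M`. -/
theorem stmt16 {L M : Type*} [Lattice L] [Lattice M] [Nonempty L]
    (ψ : L × L → M × M)
    (hvt : ∀ x y : L × L, ψ (joinT x y) = joinT (ψ x) (ψ y))
    (hmt : ∀ x y : L × L, ψ (meetT x y) = meetT (ψ x) (ψ y))
    (hvk : ∀ x y : L × L, ψ (joinK x y) = joinK (ψ x) (ψ y))
    (hmk : ∀ x y : L × L, ψ (meetK x y) = meetK (ψ x) (ψ y))
    (hneg : ∀ x : L × L, ψ (negB x) = negB (ψ x)) :
    ∃ h : L → M,
      (∀ a b : L, h (a ⊔ b) = h a ⊔ h b) ∧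
      (∀ a b : L, h (a ⊓ b) = h a ⊓ h b) ∧
      ∀ a b : L, ψ (a, b) = (h a, h b) :=
  stmt16_general ψ hvt hvk hmk hneg
end
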